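/- arXiv:1703.10578 — 8 statements merged into one kernel-verified Lean document; each statement's English description precedes it below -/
import Mathlib

section
/- Let N ≥ 1, let ν_1 > ν_2 > … > ν_N be real numbers, let m and c be complex numbers, and let R > max_j |ν_j|. Then (1/(2πi)) ∮_{|z|=R} (∏_{j=1}^N (1 + m/(z − ν_j))) · e^{cz} dz = Σ_{j=1}^N m · e^{c ν_j} · ∏_{i ≠ j} (ν_j + m − ν_i)/(ν_j − ν_i), where the contour integral is over the positively oriented circle of radius R centred at 0. -/
/-!
Writing `P(z) = ∏ (z - ν_j)` and `Q(z) = ∏ (z - ν_j + m)`, the product is `Q/P`, and `Q - P` has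
degree `< N`. Lagrange interpolation of `Q - P` at the nodes `ν_j` therefore yields the partial
fraction expansion `Q/P = 1 + ∑ A_j / (z - ν_j)`, with `A_j = (Q - P)(ν_j) / P'(ν_j)` the
coefficient on the right-hand side. Against the entire function `e^{cz}` the constant term
integrates to `0` (Cauchy's theorem) and each simple pole to `2πi A_j e^{cν_j}` (Cauchy's integral
formula).
-/

open Finset Polynomial Metric

namespace Lagrange

theorem degree_nodal_sub_nodal_lt {R ι : Type*} [CommRing R] [Nontrivial R] (s : Finset ι)
    (v w : ι → R) : (nodal s v - nodal s w).degree < #s :=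
  degree_nodal (s := s) (v := v) ▸ degree_sub_lt_left (by rw [degree_nodal, degree_nodal])
    nodal_ne_zero (by rw [nodal_monic.leadingCoeff, nodal_monic.leadingCoeff])

variable {F ι : Type*} [Field F] [DecidableEq ι] {s : Finset ι} {v : ι → F} {x : F}

theorem eval_div_eval_nodal (hvs : Set.InjOn v s) {f : F[X]} (hf : f.degree < #s)
    (hx : ∀ i ∈ s, x ≠ v i) :
    f.eval x / (nodal s v).eval x = ∑ i ∈ s, nodalWeight s v i * (x - v i)⁻¹ * f.eval (v i) := by
  conv_lhs => rw [eq_interpolate hvs hf]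
  rw [eval_interpolate_not_at_node _ hx, mul_div_cancel_left₀ _ (eval_nodal_not_at_node hx)]

theorem prod_one_add_div_sub_eq_one_add_sum (hvs : Set.InjOn v s) (hx : ∀ i ∈ s, x ≠ v i)
    (m : F) :
    ∏ j ∈ s, (1 + m / (x - v j)) =
      1 + ∑ j ∈ s, m * (∏ i ∈ s.erase j, (v j + m - v i) / (v j - v i)) * (x - v j)⁻¹ := by
  set p := nodal s (fun i => v i - m)
  have hq : (nodal s v).eval x ≠ 0 := eval_nodal_not_at_node hx
  have hprod : ∏ j ∈ s, (1 + m / (x - v j)) = p.eval x / (nodal s v).eval x := by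
    rw [eval_nodal, eval_nodal, ← prod_div_distrib]
    refine prod_congr rfl fun j hj => ?_
    field_simp [sub_ne_zero.2 (hx j hj)]
    ring
  have hnode : ∀ j ∈ s, (p - nodal s v).eval (v j) = m * ∏ i ∈ s.erase j, (v j + m - v i) := by
    intro j hj
    rw [eval_sub, eval_nodal_at_node hj, sub_zero, eval_nodal, ← mul_prod_erase _ _ hj]
    exact congr_arg₂ _ (by ring) (prod_congr rfl fun i _ => by ring)
  calc ∏ j ∈ s, (1 + m / (x - v j))
      = 1 + (p - nodal s v).eval x / (nodal s v).eval x := by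
        rw [hprod, eval_sub, sub_div, div_self hq]; ring
    _ = 1 + ∑ j ∈ s, nodalWeight s v j * (x - v j)⁻¹ * (p - nodal s v).eval (v j) := by
        rw [eval_div_eval_nodal hvs (degree_nodal_sub_nodal_lt s _ v) hx]
    _ = _ := by
        refine congr_arg _ (sum_congr rfl fun j hj => ?_)
        rw [hnode j hj, nodalWeight, prod_inv_distrib, prod_div_distrib]
        ring

end Lagrange

theorem DiffContOnCl.circleIntegral_one_add_sum_mul_inv_sub_smul {E ι : Type*}
    [NormedAddCommGroup E] [NormedSpace ℂ E] [CompleteSpace E] {f : ℂ → E} {c : ℂ} {R : ℝ}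
    (hf : DiffContOnCl ℂ f (ball c R)) (hR : 0 ≤ R) {s : Finset ι} {w : ι → ℂ}
    (hw : ∀ j ∈ s, w j ∈ ball c R) (A : ι → ℂ) :
    (∮ z in C(c, R), (1 + ∑ j ∈ s, A j * (z - w j)⁻¹) • f z) =
      (2 * Real.pi * Complex.I : ℂ) • ∑ j ∈ s, A j • f (w j) := by
  have hterm : ∀ j ∈ s, CircleIntegrable (fun z => A j • (z - w j)⁻¹ • f z) c R := by
    intro j hj
    refine ContinuousOn.circleIntegrable hR (continuousOn_const.smul (ContinuousOn.smul ?_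
      (hf.continuousOn_ball.mono sphere_subset_closedBall)))
    exact (continuousOn_id.sub continuousOn_const).inv₀ fun z hz => sub_ne_zero.2 <|
      ne_of_mem_of_not_mem hz fun h => (mem_sphere.1 h).not_lt (mem_ball.1 (hw j hj))
  have hsum : CircleIntegrable (fun z => ∑ j ∈ s, A j • (z - w j)⁻¹ • f z) c R := by
    rw [← Finset.sum_fn]
    exact CircleIntegrable.sum s hterm
  calc (∮ z in C(c, R), (1 + ∑ j ∈ s, A j * (z - w j)⁻¹) • f z)
      = ∮ z in C(c, R), (f z + ∑ j ∈ s, A j • (z - w j)⁻¹ • f z) := by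
        simp only [add_smul, one_smul, sum_smul, mul_smul]
    _ = (∮ z in C(c, R), f z) + ∑ j ∈ s, A j • ∮ z in C(c, R), (z - w j)⁻¹ • f z := by
        rw [circleIntegral.integral_add (hf.continuousOn_ball.mono sphere_subset_closedBall
          |>.circleIntegrable hR) hsum, circleIntegral.integral_fun_sum hterm]
        simp only [circleIntegral.integral_smul]
    _ = _ := by
        rw [hf.circleIntegral_eq_zero hR, zero_add, smul_sum]
        refine sum_congr rfl fun j hj => ?_
        rw [hf.circleIntegral_sub_inv_smul (hw j hj), smul_comm]

/-- Residue evaluation of the contour integral `I_m^a` appearing in the representation of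
Wilson loop moments by a discrete β-ensemble. -/
theorem contour_integral_residue_formula
    (N : ℕ) (hN : 1 ≤ N) (ν : Fin N → ℝ) (hν : StrictAnti ν)
    (m c : ℂ) (R : ℝ) (hR : ∀ j, |ν j| < R) :
    (1 / (2 * (Real.pi : ℂ) * Complex.I)) *
        (∮ z in C(0, R), (∏ j, (1 + m / (z - (ν j : ℂ)))) * Complex.exp (c * z)) =
      ∑ j, m * Complex.exp (c * (ν j : ℂ)) *
        ∏ i ∈ Finset.univ.erase j, (((ν j : ℂ) + m - (ν i : ℂ)) / ((ν j : ℂ) - (ν i : ℂ))) := by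
  have hR0 : 0 < R := (abs_nonneg _).trans_lt (hR ⟨0, hN⟩)
  have hball : ∀ j, (ν j : ℂ) ∈ ball (0 : ℂ) R := fun j => by
    simpa [Complex.norm_real] using hR j
  have hexp : DiffContOnCl ℂ (fun z => Complex.exp (c * z)) (ball 0 R) :=
    (Complex.differentiable_exp.comp (differentiable_id.const_mul c)).diffContOnCl
  rw [circleIntegral.integral_congr hR0.le fun z hz => by
      rw [Lagrange.prod_one_add_div_sub_eq_one_add_sum (v := fun j => (ν j : ℂ))
        (Complex.ofReal_injective.comp hν.injective).injOn fun j _ =>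
          ne_of_mem_of_not_mem hz fun h => (mem_sphere.1 h).not_lt (hball j), ← smul_eq_mul],
    hexp.circleIntegral_one_add_sum_mul_inv_sub_smul hR0.le fun j _ => hball j]
  have h2πI : (2 * Real.pi * Complex.I : ℂ) ≠ 0 := by simp [Real.pi_ne_zero, Complex.I_ne_zero]
  rw [smul_eq_mul, one_div, inv_mul_cancel_left₀ h2πI]
  exact sum_congr rfl fun j _ => by rw [smul_eq_mul]; ring
end

section
/- For every integer n ≥ 1, every real t, and every R > 0, (1/(2πin)) ∮_{|z|=R} (1 + 1/z)^n · e^{−ntz} dz = Σ_{k=0}^{n−1} ((−t)^k / k!) · C(n, k+1) · n^{k−1}, where C(n, k+1) is the binomial coefficient and the contour integral is over the positively oriented circle of radius R centred at 0. -/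
open Complex Metric Finset Real

/-!
Expanding `(1 + 1/z)^n` binomially, the constant term integrates to zero by Cauchy–Goursat, and
Cauchy's formula for derivatives turns `∮ z^{-(k+1)} f(z) dz` into `2πi f^{(k)}(0) / k!`. For
`f(z) = exp(-ntz)` this derivative is `(-nt)^k`, and dividing by `n` leaves `(-t)^k n^{k-1}`.
-/

variable {E : Type*} [NormedAddCommGroup E] [NormedSpace ℂ E] [CompleteSpace E]

lemma one_add_one_div_pow_eq_sum (n : ℕ) (w : ℂ) :
    (1 + 1 / w) ^ n = ∑ j ∈ range (n + 1), (n.choose j : ℂ) * (1 / w ^ j) := by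
  rw [add_comm, add_pow]
  simp [mul_comm]

lemma continuousOn_one_div_sub_center_pow {c : ℂ} {R : ℝ} (hR : R ≠ 0) (j : ℕ) :
    ContinuousOn (fun z ↦ 1 / (z - c) ^ j) (sphere c R) :=
  continuousOn_const.div (by fun_prop) fun z hz ↦
    pow_ne_zero _ (sub_ne_zero.2 (ne_of_mem_of_not_mem hz (by simp [hR.symm])))

theorem DifferentiableOn.circleIntegral_one_add_one_div_pow_smul {f : ℂ → E} {c : ℂ} {R : ℝ}
    (hR : 0 < R) (hf : DifferentiableOn ℂ f (closedBall c R)) (n : ℕ) :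
    ∮ z in C(c, R), (1 + 1 / (z - c)) ^ n • f z =
      (2 * π * I) • ∑ k ∈ range n, ((n.choose (k + 1) : ℂ) / k.factorial) •
        iteratedDeriv k f c := by
  have hint : ∀ j ∈ range (n + 1),
      CircleIntegrable (fun z ↦ (n.choose j : ℂ) • (1 / (z - c) ^ j) • f z) c R :=
    fun j _ ↦ (continuousOn_const.smul ((continuousOn_one_div_sub_center_pow hR.ne' j).smul
      (hf.continuousOn.mono sphere_subset_closedBall))).circleIntegrable hR.le
  have hcauchy : ∮ z in C(c, R), f z = 0 :=
    (hf.mono closure_ball_subset_closedBall).diffContOnCl.circleIntegral_eq_zero hR.le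
  calc ∮ z in C(c, R), (1 + 1 / (z - c)) ^ n • f z
      = ∮ z in C(c, R), ∑ j ∈ range (n + 1), (n.choose j : ℂ) • (1 / (z - c) ^ j) • f z := by
        simp_rw [one_add_one_div_pow_eq_sum, sum_smul, mul_smul]
    _ = ∑ j ∈ range (n + 1), (n.choose j : ℂ) • ∮ z in C(c, R), (1 / (z - c) ^ j) • f z := by
        rw [circleIntegral.integral_fun_sum hint]
        simp_rw [circleIntegral.integral_smul]
    _ = _ := by
        simp_rw [sum_range_succ', pow_zero, div_one, one_smul, hcauchy, smul_zero, add_zero,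
          hf.circleIntegral_one_div_sub_center_pow_smul hR, smul_sum, smul_smul]
        congr! 2 with k
        ring

theorem circleIntegral_one_add_one_div_pow_mul_cexp {R : ℝ} (hR : 0 < R) (n : ℕ) (a : ℂ) :
    ∮ z in C(0, R), (1 + 1 / z) ^ n * exp (a * z) =
      2 * π * I * ∑ k ∈ range n, (n.choose (k + 1) : ℂ) / k.factorial * a ^ k := by
  have hexp : Differentiable ℂ fun z ↦ exp (a * z) := by fun_prop
  simpa [iteratedDeriv_cexp_const_mul] using
    hexp.differentiableOn.circleIntegral_one_add_one_div_pow_smul (c := 0) hR n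

/-- Contour-integral formula for the moments of free unitary Brownian motion, arising as the
large-`T` limit of the master field on simple loops. -/
theorem free_unitary_moment_contour_formula
    (n : ℕ) (hn : 1 ≤ n) (t : ℝ) (R : ℝ) (hR : 0 < R) :
    (1 / (2 * (Real.pi : ℂ) * Complex.I * (n : ℂ))) *
        (∮ z in C(0, R), (1 + 1 / z) ^ n * Complex.exp (-(n : ℂ) * (t : ℂ) * z)) =
      ∑ k ∈ Finset.range n, ((-(t : ℂ)) ^ k / (Nat.factorial k : ℂ)) *
        (Nat.choose n (k + 1) : ℂ) * (n : ℂ) ^ ((k : ℤ) - 1) := by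
  have hn0 : (n : ℂ) ≠ 0 := by exact_mod_cast Nat.one_le_iff_ne_zero.mp hn
  rw [circleIntegral_one_add_one_div_pow_mul_cexp hR, ← mul_assoc, mul_sum]
  refine sum_congr rfl fun k _ ↦ ?_
  rw [zpow_sub_one₀ hn0, zpow_natCast]
  field_simp
  ring
end

section
/- For every t > 0 and every real u, ∫_ℝ e^{iux} s_t(x) dx = Σ_{m=0}^∞ (−u² t)^m / (m! · (m+1)!), where the series on the right converges absolutely. -/
/-!
Since `s_t` vanishes outside `[-2√t, 2√t]`, the power series of `e^{iux}` can be integrated term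
by term, so the Fourier transform is `∑ₙ (iu)ⁿ/n! · Mₙ` with `Mₙ` the moments of `s_t`. The odd
moments vanish by symmetry; the substitution `x = 2√t sin θ` and Wallis' integrals give
`M₂ₘ = tᵐ (2m)! / (m! (m+1)!)` (`tᵐ` times a Catalan number), and `(iu)²ᵐ/(2m)! · M₂ₘ` is the
`m`-th term of the series.
-/

open MeasureTheory Real Nat

/-- The semicircle density of variance `t`. -/
noncomputable def semicircleDensity (t x : ℝ) : ℝ :=
  if x ^ 2 ≤ 4 * t then Real.sqrt (4 * t - x ^ 2) / (2 * Real.pi * t) else 0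

theorem integral_sin_pow_two_mul (m : ℕ) :
    ∫ x in -(π / 2)..π / 2, sin x ^ (2 * m) = π * (2 * m)! / (4 ^ m * (m ! : ℝ) ^ 2) := by
  induction m with
  | zero => simp
  | succ k ih =>
    rw [Nat.mul_succ, integral_sin_pow, ih]
    simp only [cos_neg, cos_pi_div_two, mul_zero, sub_zero, zero_div, zero_add]
    push_cast [factorial_succ]
    field_simp
    ring

theorem integral_sin_pow_mul_cos_sq (n : ℕ) :
    ∫ x in -(π / 2)..π / 2, sin x ^ n * cos x ^ 2 =
      (∫ x in -(π / 2)..π / 2, sin x ^ n) / (n + 2) := by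
  have hsplit : ∫ x in -(π / 2)..π / 2, sin x ^ n * cos x ^ 2 =
      (∫ x in -(π / 2)..π / 2, sin x ^ n) - ∫ x in -(π / 2)..π / 2, sin x ^ (n + 2) := by
    rw [← intervalIntegral.integral_sub (f := fun x => sin x ^ n) (g := fun x => sin x ^ (n + 2))
      ((continuous_sin.pow _).intervalIntegrable _ _) ((continuous_sin.pow _).intervalIntegrable _ _)]
    congr with x
    rw [cos_sq']
    ring
  rw [hsplit, integral_sin_pow]
  simp only [cos_neg, cos_pi_div_two, mul_zero, sub_zero, zero_div, zero_add]
  field_simp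
  ring

theorem integral_pow_mul_sqrt_sq_sub_sq {r : ℝ} (hr : 0 ≤ r) (n : ℕ) :
    ∫ x in -r..r, x ^ n * √(r ^ 2 - x ^ 2) =
      r ^ (n + 2) * ∫ θ in -(π / 2)..π / 2, sin θ ^ n * cos θ ^ 2 := by
  have hsubst := intervalIntegral.integral_comp_mul_deriv (a := -(π / 2)) (b := π / 2)
    (f := fun θ => r * sin θ) (f' := fun θ => r * cos θ)
    (g := fun x => x ^ n * √(r ^ 2 - x ^ 2))
    (fun θ _ => (hasDerivAt_sin θ).const_mul r) (by fun_prop) (by fun_prop)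
  simp only [sin_neg, sin_pi_div_two, mul_neg, mul_one] at hsubst
  rw [← hsubst, ← intervalIntegral.integral_const_mul]
  refine intervalIntegral.integral_congr fun θ hθ => ?_
  rw [Set.uIcc_of_le (by linarith [pi_pos])] at hθ
  have hsqrt : √(r ^ 2 - (r * sin θ) ^ 2) = r * cos θ := by
    rw [← sqrt_sq (mul_nonneg hr (cos_nonneg_of_mem_Icc hθ))]
    congr 1
    nlinarith [sin_sq_add_cos_sq θ]
  simp only [Function.comp, hsqrt]
  ring

theorem integral_mul_sqrt_sq_sub_sq_eq_intervalIntegral {r : ℝ} (hr : 0 ≤ r) (g : ℝ → ℝ) :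
    ∫ x, g x * √(r ^ 2 - x ^ 2) = ∫ x in -r..r, g x * √(r ^ 2 - x ^ 2) := by
  rw [intervalIntegral.integral_of_le (by linarith),
    setIntegral_eq_integral_of_forall_compl_eq_zero fun x hx => ?_]
  rw [Set.mem_Ioc, not_and_or, not_lt, not_le] at hx
  rw [sqrt_eq_zero'.2 (by rcases hx with hx | hx <;> nlinarith), mul_zero]

theorem integral_pow_mul_eq_zero_of_odd {f : ℝ → ℝ} (hf : ∀ x, f (-x) = f x) {n : ℕ}
    (hn : Odd n) : ∫ x, x ^ n * f x = 0 := by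
  have hneg := integral_neg_eq_self (fun x => x ^ n * f x) volume
  simp only [hn.neg_pow, hf, neg_mul, integral_neg] at hneg
  linarith

theorem integral_cexp_mul_eq_tsum_moments {f : ℝ → ℂ} (hf : Integrable f) {R : ℝ}
    (hR : ∀ x, R < |x| → f x = 0) (u : ℝ) :
    ∫ x : ℝ, Complex.exp (Complex.I * u * x) * f x =
      ∑' n : ℕ, (Complex.I * u) ^ n / n ! * ∫ x : ℝ, (x : ℂ) ^ n * f x := by
  set F : ℕ → ℝ → ℂ := fun n x => (Complex.I * u * x) ^ n / n ! * f x
  have hF_le : ∀ n x, ‖F n x‖ ≤ (|u| * R) ^ n / n ! * ‖f x‖ := by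
    intro n x
    rcases le_or_gt |x| R with hx | hx
    · simp only [F, norm_mul, norm_div, norm_pow, Complex.norm_I, Complex.norm_real,
        norm_eq_abs, Complex.norm_natCast, one_mul]
      gcongr
    · simp [F, hR x hx]
  have hF_int : ∀ n, Integrable (F n) := fun n =>
    Integrable.mono' (hf.norm.const_mul _) (by fun_prop) (ae_of_all _ (hF_le n))
  have hF_sum : Summable fun n => ∫ x, ‖F n x‖ :=
    Summable.of_nonneg_of_le (fun n => integral_nonneg fun x => norm_nonneg _)
      (fun n => (integral_mono (hF_int n).norm (hf.norm.const_mul _) (hF_le n)).trans_eq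
        (integral_const_mul _ _))
      ((summable_pow_div_factorial _).mul_right _)
  calc ∫ x : ℝ, Complex.exp (Complex.I * u * x) * f x = ∫ x, ∑' n, F n x := by
        congr with x
        rw [Complex.exp_eq_exp_ℂ, NormedSpace.exp_eq_tsum_div, tsum_mul_right]
    _ = ∑' n, ∫ x, F n x := (integral_tsum_of_summable_integral_norm hF_int hF_sum).symm
    _ = _ := by
        congr with n
        rw [← integral_const_mul]
        congr with x
        simp only [F, mul_pow]
        ring

theorem tsum_eq_tsum_two_mul_of_odd_eq_zero {M : Type*} [AddCommMonoid M] [TopologicalSpace M]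
    {f : ℕ → M} (hf : ∀ k, f (2 * k + 1) = 0) : ∑' n, f n = ∑' k, f (2 * k) := by
  refine ((mul_right_injective₀ two_ne_zero).tsum_eq fun n hn => ?_).symm
  rcases n.even_or_odd' with ⟨k, rfl | rfl⟩
  · exact ⟨k, rfl⟩
  · exact absurd (hf k) hn

theorem summable_abs_pow_div_factorial_mul_factorial_succ (a : ℝ) :
    Summable fun m : ℕ => |a ^ m / (m ! * (m + 1)! : ℝ)| := by
  refine Summable.of_nonneg_of_le (fun m => abs_nonneg _) (fun m => ?_)
    (summable_pow_div_factorial |a|)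
  rw [abs_div, abs_pow, abs_of_pos (by positivity : (0 : ℝ) < m ! * (m + 1)!)]
  gcongr
  exact le_mul_of_one_le_right (by positivity) (one_le_cast.2 (m + 1).factorial_pos)

-- `√` of a negative number is `0`, which makes the cut-off in the definition automatic.
theorem semicircleDensity_eq (t x : ℝ) :
    semicircleDensity t x = √(4 * t - x ^ 2) / (2 * π * t) := by
  rw [semicircleDensity]
  split_ifs with h
  · rfl
  · rw [sqrt_eq_zero'.2 (by linarith), zero_div]

theorem semicircleDensity_neg (t x : ℝ) : semicircleDensity t (-x) = semicircleDensity t x := by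
  simp only [semicircleDensity_eq, neg_sq]

theorem semicircleDensity_eq_zero_of_lt_abs {t x : ℝ} (ht : 0 ≤ t) (hx : 2 * √t < |x|) :
    semicircleDensity t x = 0 := by
  have hsq := pow_lt_pow_left₀ hx (by positivity) two_ne_zero
  rw [mul_pow, sq_sqrt ht, sq_abs] at hsq
  rw [semicircleDensity_eq, sqrt_eq_zero'.2 (by linarith), zero_div]

theorem integrable_semicircleDensity {t : ℝ} (ht : 0 ≤ t) : Integrable (semicircleDensity t) := by
  refine Continuous.integrable_of_hasCompactSupport ?_ <|
    HasCompactSupport.intro (isCompact_Icc (a := -(2 * √t)) (b := 2 * √t)) fun x hx =>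
      semicircleDensity_eq_zero_of_lt_abs ht (not_le.1 fun h => hx (abs_le.1 h))
  simp_rw [funext (semicircleDensity_eq t)]
  fun_prop

theorem integral_pow_two_mul_mul_semicircleDensity {t : ℝ} (ht : 0 < t) (m : ℕ) :
    ∫ x, x ^ (2 * m) * semicircleDensity t x = t ^ m * (2 * m)! / (m ! * (m + 1)!) := by
  have h4t : 4 * t = (2 * √t) ^ 2 := by rw [mul_pow, sq_sqrt ht.le]; norm_num
  simp_rw [semicircleDensity_eq, h4t, ← mul_div_assoc]
  rw [integral_div, integral_mul_sqrt_sq_sub_sq_eq_intervalIntegral (by positivity),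
    integral_pow_mul_sqrt_sq_sub_sq (by positivity), integral_sin_pow_mul_cos_sq,
    integral_sin_pow_two_mul, show 2 * m + 2 = 2 * (m + 1) by ring, pow_mul, ← h4t]
  push_cast [factorial_succ]
  field_simp
  ring

/-- The Fourier transform of the semicircle distribution of variance `t`, as an absolutely
convergent series. -/
theorem semicircle_fourier_transform (t : ℝ) (ht : 0 < t) (u : ℝ) :
    (Summable fun m : ℕ =>
      |(-(u ^ 2) * t) ^ m / (Nat.factorial m * Nat.factorial (m + 1))|) ∧
    (∫ x : ℝ, Complex.exp (Complex.I * (u : ℂ) * (x : ℂ)) * (semicircleDensity t x : ℂ)) =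
      ∑' m : ℕ,
        (((-(u ^ 2) * t) ^ m / (Nat.factorial m * Nat.factorial (m + 1)) : ℝ) : ℂ) := by
  refine ⟨summable_abs_pow_div_factorial_mul_factorial_succ _, ?_⟩
  have hmoment (n : ℕ) : ∫ x : ℝ, (x : ℂ) ^ n * (semicircleDensity t x : ℂ) =
      ((∫ x, x ^ n * semicircleDensity t x : ℝ) : ℂ) := by
    rw [← integral_complex_ofReal]
    push_cast
    rfl
  rw [integral_cexp_mul_eq_tsum_moments (f := fun x => (semicircleDensity t x : ℂ))
      (integrable_semicircleDensity ht.le).ofReal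
      (fun x hx => by rw [semicircleDensity_eq_zero_of_lt_abs ht.le hx, Complex.ofReal_zero]) u,
    tsum_eq_tsum_two_mul_of_odd_eq_zero fun k => by
      rw [hmoment, integral_pow_mul_eq_zero_of_odd (semicircleDensity_neg t)
        (odd_two_mul_add_one k), Complex.ofReal_zero, mul_zero]]
  refine tsum_congr fun m => ?_
  rw [hmoment, integral_pow_two_mul_mul_semicircleDensity ht, pow_mul, mul_pow, Complex.I_sq]
  have hfact := (Nat.cast_ne_zero (R := ℂ)).2 (2 * m).factorial_ne_zero
  push_cast
  field_simp
  ring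
end

section
/- Let N ≥ 1, let x_1, …, x_N be nonzero complex numbers, let μ_1, …, μ_N be integers, and let n be an integer. Then det(x_j^{μ_k})_{j,k=1}^N · (Σ_{j=1}^N x_j^n) = Σ_{m=1}^N det(M^{(m)}), where M^{(m)} is the N×N matrix with entries M^{(m)}_{j,k} = x_j^{μ_k + n} if k = m and M^{(m)}_{j,k} = x_j^{μ_k} otherwise. -/
open scoped BigOperators

/-! Scaling column `m` of `A` entrywise by `c j` multiplies the Leibniz term of `σ` by `c (σ m)`;
summing over `m` multiplies it by `∑ j, c j`. With `A j k = x j ^ μ k` and `c j = x j ^ n` this is the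
theorem. -/

open Finset

theorem Fintype.prod_update_mul_self {ι M : Type*} [Fintype ι] [DecidableEq ι] [CommMonoid M]
    (f : ι → M) (m : ι) (c : M) :
    ∏ k, Function.update f m (c * f m) k = c * ∏ k, f k := by
  rw [prod_update_of_mem (mem_univ m), mul_assoc,
    prod_eq_mul_prod_sdiff_singleton_of_mem (mem_univ m)]

theorem Matrix.det_mul_sum_eq_sum_det_updateCol {ι R : Type*} [Fintype ι] [DecidableEq ι]
    [CommRing R] (A : Matrix ι ι R) (c : ι → R) :
    A.det * ∑ j, c j = ∑ m, (A.updateCol m fun j => c j * A j m).det := by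
  simp only [det_apply, sum_mul]
  rw [sum_comm]
  refine sum_congr rfl fun σ _ => ?_
  have column_scaled (m : ι) :
      ∏ k, (A.updateCol m fun j => c j * A j m) (σ k) k = c (σ m) * ∏ k, A (σ k) k := by
    have term_eq_update : (fun k => (A.updateCol m fun j => c j * A j m) (σ k) k) =
        Function.update (fun k => A (σ k) k) m (c (σ m) * A (σ m) m) := by
      ext k; by_cases hk : k = m <;> simp [hk]
    rw [term_eq_update, Fintype.prod_update_mul_self]
  simp_rw [column_scaled]
  rw [← smul_sum, ← sum_mul, Equiv.sum_comp σ c, smul_mul_assoc, mul_comm]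

theorem alternant_mul_powerSum_general (N : ℕ) (x : Fin N → ℂ) (hx : ∀ j, x j ≠ 0)
    (μ : Fin N → ℤ) (n : ℤ) :
    (Matrix.of fun j k : Fin N => x j ^ μ k).det * (∑ j : Fin N, x j ^ n) =
      ∑ m : Fin N, (Matrix.of fun j k : Fin N =>
        if k = m then x j ^ (μ k + n) else x j ^ μ k).det := by
  rw [Matrix.det_mul_sum_eq_sum_det_updateCol]
  refine sum_congr rfl fun m _ => congrArg Matrix.det ?_
  ext j k
  by_cases hk : k = m
  · simp [hk, zpow_add₀ (hx j), mul_comm]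
  · simp [hk]

/-- The multiplication rule for Weyl alternant determinants: multiplying the alternant
`det(x_j^{μ_k})` by the power sum `∑_j x_j^n` yields the sum of the alternants obtained by
shifting one exponent by `n`. -/
theorem alternant_mul_powerSum (N : ℕ) (hN : 1 ≤ N) (x : Fin N → ℂ) (hx : ∀ j, x j ≠ 0)
    (μ : Fin N → ℤ) (n : ℤ) :
    (Matrix.of fun j k : Fin N => x j ^ μ k).det * (∑ j : Fin N, x j ^ n) =
      ∑ m : Fin N, (Matrix.of fun j k : Fin N =>
        if k = m then x j ^ (μ k + n) else x j ^ μ k).det :=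
  alternant_mul_powerSum_general N x hx μ n
end

section
/- Let (Ω, F, P) be a probability space, let N ≥ 1, and let U, V : Ω → M_N(ℂ) be measurable maps taking values in the unitary group U(N). Write tr = Tr/N for the normalized trace. Then √(1 − Re E[tr(V·U)]) ≤ √(1 − Re E[tr U]) + √(1 − Re E[tr V]). (Note that 1 − Re E[tr W] ∈ [0, 2] for any random unitary W, so the square roots are well defined.) -/
/-!
For a unitary `W`, the Frobenius norm satisfies `‖1 - W‖² = 2N - 2 Re Tr W`, so
`√(1 - Re E[tr W]) = ‖1 - W‖_{L²(P)} / √(2N)`, the `L²` norm being that of matrix-valued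
functions with the Frobenius norm. Subadditivity is then Minkowski's inequality for
`1 - VU = (1 - V) + V (1 - U)`, since left multiplication by the unitary `V` preserves the
Frobenius norm.
-/

open MeasureTheory Matrix

/-- Matrices over a measurable space carry the product measurable structure, entrywise. -/
instance matrixMeasurableSpace {m n α : Type*} [MeasurableSpace α] :
    MeasurableSpace (Matrix m n α) :=
  inferInstanceAs (MeasurableSpace (m → n → α))

attribute [local instance] Matrix.frobeniusNormedAddCommGroup

namespace Matrix

section Topology

variable {m n α : Type*} [Finite m] [Finite n] [TopologicalSpace α]

instance [SecondCountableTopology α] : SecondCountableTopology (Matrix m n α) :=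
  inferInstanceAs (SecondCountableTopology (m → n → α))

instance [TopologicalSpace.PseudoMetrizableSpace α] :
    TopologicalSpace.PseudoMetrizableSpace (Matrix m n α) :=
  inferInstanceAs (TopologicalSpace.PseudoMetrizableSpace (m → n → α))

instance [MeasurableSpace α] [BorelSpace α] [SecondCountableTopology α] :
    BorelSpace (Matrix m n α) :=
  inferInstanceAs (BorelSpace (m → n → α))

end Topology

section Frobenius

variable {𝕜 m n : Type*} [RCLike 𝕜] [Fintype m] [Fintype n]

theorem conjTranspose_mul_self_of_mem_unitaryGroup [DecidableEq n] {U : Matrix n n 𝕜}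
    (hU : U ∈ unitaryGroup n 𝕜) : Uᴴ * U = 1 :=
  mem_unitaryGroup_iff'.mp hU

theorem frobenius_norm_sq_eq_re_trace_conjTranspose_mul (A : Matrix m n 𝕜) :
    ‖A‖ ^ 2 = RCLike.re (Aᴴ * A).trace := by
  rw [frobenius_norm_def, ← Real.rpow_natCast, ← Real.rpow_mul (by positivity)]
  simp only [trace, diag, mul_apply, conjTranspose_apply, RCLike.star_def, RCLike.conj_mul,
    map_sum, ← RCLike.ofReal_pow, RCLike.ofReal_re, Real.rpow_two]
  rw [Finset.sum_comm]
  norm_num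

theorem frobenius_norm_unitary_mul [DecidableEq m] {U : Matrix m m 𝕜}
    (hU : U ∈ unitaryGroup m 𝕜) (A : Matrix m n 𝕜) : ‖U * A‖ = ‖A‖ := by
  refine (sq_eq_sq₀ (norm_nonneg _) (norm_nonneg _)).mp ?_
  rw [frobenius_norm_sq_eq_re_trace_conjTranspose_mul,
    frobenius_norm_sq_eq_re_trace_conjTranspose_mul, conjTranspose_mul, Matrix.mul_assoc,
    ← Matrix.mul_assoc Uᴴ, conjTranspose_mul_self_of_mem_unitaryGroup hU, Matrix.one_mul]

variable [DecidableEq n] {W : Matrix n n 𝕜}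

theorem frobenius_norm_of_mem_unitaryGroup (hW : W ∈ unitaryGroup n 𝕜) :
    ‖W‖ = √(Fintype.card n) := by
  rw [← Real.sqrt_sq (norm_nonneg W), frobenius_norm_sq_eq_re_trace_conjTranspose_mul,
    conjTranspose_mul_self_of_mem_unitaryGroup hW]
  simp

theorem frobenius_norm_one_sub_sq_of_mem_unitaryGroup (hW : W ∈ unitaryGroup n 𝕜) :
    ‖1 - W‖ ^ 2 = 2 * Fintype.card n - 2 * RCLike.re W.trace := by
  have : (1 - W)ᴴ * (1 - W) = 1 - Wᴴ - W + Wᴴ * W := by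
    rw [conjTranspose_sub, conjTranspose_one]
    noncomm_ring
  rw [frobenius_norm_sq_eq_re_trace_conjTranspose_mul, this,
    conjTranspose_mul_self_of_mem_unitaryGroup hW]
  simp [trace_conjTranspose]
  ring

theorem norm_trace_le_card_of_mem_unitaryGroup (hW : W ∈ unitaryGroup n 𝕜) :
    ‖W.trace‖ ≤ Fintype.card n :=
  calc ‖W.trace‖ ≤ ∑ i, ‖W i i‖ := norm_sum_le _ _
    _ ≤ ∑ _i : n, (1 : ℝ) := Finset.sum_le_sum fun i _ => entry_norm_bound_of_unitary hW i i
    _ = Fintype.card n := by simp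

end Frobenius

end Matrix

theorem MeasureTheory.lpNorm_two_sq_eq_integral_norm_sq {α E : Type*} [MeasurableSpace α]
    [NormedAddCommGroup E] {μ : Measure α} {f : α → E} (hf : AEStronglyMeasurable f μ) :
    lpNorm f 2 μ ^ 2 = ∫ x, ‖f x‖ ^ 2 ∂μ := by
  rw [lpNorm_eq_integral_norm_rpow_toReal two_ne_zero ENNReal.ofNat_ne_top hf]
  norm_num [Real.rpow_two]
  rw [← Real.sqrt_eq_rpow, Real.sq_sqrt (integral_nonneg fun x => by positivity)]

section RandomUnitary

variable {Ω 𝕜 n : Type*} [MeasurableSpace Ω] {P : Measure Ω} [RCLike 𝕜] [Fintype n]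
  [DecidableEq n] {U V W : Ω → Matrix n n 𝕜}

theorem memLp_one_sub_of_mem_unitaryGroup [IsFiniteMeasure P] (hW : Measurable W)
    (hWu : ∀ ω, W ω ∈ unitaryGroup n 𝕜) (p : ENNReal) : MemLp (fun ω => 1 - W ω) p P :=
  (memLp_const 1).sub <| .of_bound hW.aestronglyMeasurable _
    (.of_forall fun ω => (frobenius_norm_of_mem_unitaryGroup (hWu ω)).le)

theorem integrable_trace_of_mem_unitaryGroup [IsFiniteMeasure P] (hW : Measurable W)
    (hWu : ∀ ω, W ω ∈ unitaryGroup n 𝕜) : Integrable (fun ω => (W ω).trace) P :=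
  .of_bound (μ := P) (continuous_id.matrix_trace.measurable.comp hW).aestronglyMeasurable _
    (.of_forall fun ω => norm_trace_le_card_of_mem_unitaryGroup (hWu ω))

theorem lpNorm_one_sub_sq_of_mem_unitaryGroup [IsProbabilityMeasure P] (hW : Measurable W)
    (hWu : ∀ ω, W ω ∈ unitaryGroup n 𝕜) :
    lpNorm (fun ω => 1 - W ω) 2 P ^ 2 =
      2 * Fintype.card n - 2 * RCLike.re (∫ ω, (W ω).trace ∂P) := by
  have htr := integrable_trace_of_mem_unitaryGroup (P := P) hW hWu
  rw [lpNorm_two_sq_eq_integral_norm_sq (hW.const_sub 1).aestronglyMeasurable,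
    integral_congr_ae (.of_forall fun ω => frobenius_norm_one_sub_sq_of_mem_unitaryGroup (hWu ω)),
    integral_sub (integrable_const _) (htr.re.const_mul 2),
    integral_const_mul 2 fun ω => RCLike.re (W ω).trace, integral_re htr]
  simp

theorem sqrt_one_sub_re_integral_trace_div_card [IsProbabilityMeasure P] [Nonempty n]
    (hW : Measurable W) (hWu : ∀ ω, W ω ∈ unitaryGroup n 𝕜) :
    √(1 - RCLike.re (∫ ω, (W ω).trace / (Fintype.card n : 𝕜) ∂P)) =
      lpNorm (fun ω => 1 - W ω) 2 P / √(2 * Fintype.card n) := by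
  have hn : (0 : ℝ) < Fintype.card n := by exact_mod_cast Fintype.card_pos
  have h := lpNorm_one_sub_sq_of_mem_unitaryGroup (P := P) hW hWu
  rw [← Real.sqrt_sq (lpNorm_nonneg (f := fun ω => 1 - W ω)), ← Real.sqrt_div' _ (by positivity),
    h, integral_div, ← RCLike.ofReal_natCast, RCLike.div_re_ofReal]
  congr 1
  field_simp

theorem lpNorm_one_sub_mul_le [IsFiniteMeasure P] {p : ENNReal} (hp : 1 ≤ p)
    (hU : Measurable U) (hV : Measurable V)
    (hUu : ∀ ω, U ω ∈ unitaryGroup n 𝕜) (hVu : ∀ ω, V ω ∈ unitaryGroup n 𝕜) :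
    lpNorm (fun ω => 1 - V ω * U ω) p P ≤
      lpNorm (fun ω => 1 - U ω) p P + lpNorm (fun ω => 1 - V ω) p P := by
  have hU2 := memLp_one_sub_of_mem_unitaryGroup (P := P) hU hUu p
  have hsplit : (fun ω => 1 - V ω * U ω) = (fun ω => 1 - V ω) + fun ω => V ω * (1 - U ω) := by
    ext1 ω
    simp only [Pi.add_apply, Matrix.mul_sub, Matrix.mul_one]
    abel
  have hunitary : lpNorm (fun ω => V ω * (1 - U ω)) p P ≤ lpNorm (fun ω => 1 - U ω) p P := by
    rw [← lpNorm_norm hU2.aestronglyMeasurable]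
    exact lpNorm_mono_real hU2.norm fun ω => (frobenius_norm_unitary_mul (hVu ω) _).le
  rw [hsplit, add_comm (lpNorm _ p P)]
  exact (lpNorm_add_le (memLp_one_sub_of_mem_unitaryGroup hV hVu p) hp).trans (by gcongr)

end RandomUnitary

/-- Subadditivity of the defect functional `Ψ_N(α) = √(1 − Re E[tr H_α])` for random
unitary matrices. -/
theorem defect_subadditive {Ω : Type*} [MeasurableSpace Ω] (P : Measure Ω)
    [IsProbabilityMeasure P] (N : ℕ) (hN : 1 ≤ N)
    (U V : Ω → Matrix (Fin N) (Fin N) ℂ) (hU : Measurable U) (hV : Measurable V)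
    (hUu : ∀ ω, U ω ∈ Matrix.unitaryGroup (Fin N) ℂ)
    (hVu : ∀ ω, V ω ∈ Matrix.unitaryGroup (Fin N) ℂ) :
    Real.sqrt (1 - (∫ ω, (V ω * U ω).trace / (N : ℂ) ∂P).re) ≤
      Real.sqrt (1 - (∫ ω, (U ω).trace / (N : ℂ) ∂P).re) +
        Real.sqrt (1 - (∫ ω, (V ω).trace / (N : ℂ) ∂P).re) := by
  have : Nonempty (Fin N) := ⟨⟨0, hN⟩⟩
  have hdefect {W : Ω → Matrix (Fin N) (Fin N) ℂ} (hW : Measurable W)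
      (hWu : ∀ ω, W ω ∈ unitaryGroup (Fin N) ℂ) :
      √(1 - (∫ ω, (W ω).trace / (N : ℂ) ∂P).re) = lpNorm (fun ω => 1 - W ω) 2 P / √(2 * N) := by
    simpa only [Fintype.card_fin, RCLike.re_to_complex] using
      sqrt_one_sub_re_integral_trace_div_card (P := P) hW hWu
  have hVU : Measurable fun ω => V ω * U ω := hV.mul hU
  rw [hdefect hU hUu, hdefect hV hVu, hdefect hVU fun ω => mul_mem (hVu ω) (hUu ω), ← add_div]
  gcongr
  exact lpNorm_one_sub_mul_le one_le_two hU hV hUu hVu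
end

section
/- Let (Ω, F, P) be a probability space, let N ≥ 1, and let U, V : Ω → M_N(ℂ) be measurable maps taking values in the unitary group U(N). Write tr = Tr/N for the normalized trace. Then |√(1 − Re E[tr U]) − √(1 − Re E[tr V])| ≤ √(1 − Re E[tr(U·V*)]). -/
open MeasureTheory Matrix

/-!
Send a unitary-valued random matrix `A` to `ω ↦ vec (A ω)` in `L²(P; ℂ^{N×N})`, whose inner
product is `⟪A, B⟫ = E[Tr(A* B)]`. Unitarity gives `‖A‖² = N`, hence
`‖A - B‖² = 2N - 2 Re E[Tr(A B*)]`, i.e. `√(1 - Re E[tr(A B*)]) = ‖A - B‖ / √(2N)`.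
The defect functional is thus `Ψ(U) = ‖U - 1‖ / √(2N)`, and the claim is the reverse triangle
inequality `|‖U - 1‖ - ‖V - 1‖| ≤ ‖U - V‖`.
-/

open scoped InnerProductSpace
open WithLp (toLp)

namespace Matrix

theorem measurable_toLp_vec {R : Type*} [MeasurableSpace R] {m n : Type*} :
    Measurable fun A : Matrix m n R => toLp 2 A.vec :=
  (WithLp.measurable_toLp _ _).comp <| measurable_pi_lambda _ fun p =>
    (measurable_pi_apply p.1).comp (measurable_pi_apply p.2)

variable {𝕜 : Type*} [RCLike 𝕜] {m n : Type*}

theorem inner_toLp_vec [Fintype m] [Fintype n] (A B : Matrix m n 𝕜) :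
    ⟪toLp 2 A.vec, toLp 2 B.vec⟫_𝕜 = (Aᴴ * B).trace := by
  rw [EuclideanSpace.inner_toLp_toLp, dotProduct_comm, star_vec_dotProduct_vec]

theorem norm_toLp_vec_of_mem_unitaryGroup [Fintype n] [DecidableEq n] {A : Matrix n n 𝕜}
    (hA : A ∈ unitaryGroup n 𝕜) : ‖toLp 2 A.vec‖ = √(Fintype.card n) := by
  rw [norm_eq_sqrt_re_inner (𝕜 := 𝕜), inner_toLp_vec, ← star_eq_conjTranspose,
    hA.1, trace_one, RCLike.natCast_re]

end Matrix

theorem MeasureTheory.MemLp.inner_toLp_toLp {𝕜 : Type*} [RCLike 𝕜] {E : Type*}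
    [NormedAddCommGroup E] [InnerProductSpace 𝕜 E] {Ω : Type*} [MeasurableSpace Ω]
    {P : Measure Ω} {f g : Ω → E} (hf : MemLp f 2 P) (hg : MemLp g 2 P) :
    ⟪hf.toLp f, hg.toLp g⟫_𝕜 = ∫ ω, ⟪f ω, g ω⟫_𝕜 ∂P := by
  rw [L2.inner_def]
  refine integral_congr_ae ?_
  filter_upwards [hf.coeFn_toLp, hg.coeFn_toLp] with ω hfω hgω
  rw [hfω, hgω]

section RandomUnitary

variable {𝕜 : Type*} [RCLike 𝕜] {n : Type*} [Fintype n] [DecidableEq n]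
  {Ω : Type*} [MeasurableSpace Ω] {P : Measure Ω} {A B : Ω → Matrix n n 𝕜}

theorem memLp_toLp_vec_of_mem_unitaryGroup [IsFiniteMeasure P] (hA : Measurable A)
    (hAu : ∀ ω, A ω ∈ unitaryGroup n 𝕜) (p : ENNReal) :
    MemLp (fun ω => toLp 2 (A ω).vec) p P :=
  MemLp.of_bound (measurable_toLp_vec.comp hA).aestronglyMeasurable _
    (ae_of_all _ fun ω => (norm_toLp_vec_of_mem_unitaryGroup (hAu ω)).le)

theorem norm_toLp_sq_of_mem_unitaryGroup [IsProbabilityMeasure P]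
    (hA : MemLp (fun ω => toLp 2 (A ω).vec) 2 P) (hAu : ∀ ω, A ω ∈ unitaryGroup n 𝕜) :
    ‖hA.toLp _‖ ^ 2 = Fintype.card n := by
  rw [@norm_sq_eq_re_inner 𝕜, hA.inner_toLp_toLp]
  simp_rw [inner_toLp_vec, ← star_eq_conjTranspose, (hAu _).1, trace_one]
  simp

theorem dist_toLp_sq_of_mem_unitaryGroup [IsProbabilityMeasure P]
    (hA : MemLp (fun ω => toLp 2 (A ω).vec) 2 P) (hB : MemLp (fun ω => toLp 2 (B ω).vec) 2 P)
    (hAu : ∀ ω, A ω ∈ unitaryGroup n 𝕜) (hBu : ∀ ω, B ω ∈ unitaryGroup n 𝕜) :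
    dist (hA.toLp _) (hB.toLp _) ^ 2
      = 2 * (Fintype.card n - RCLike.re (∫ ω, (A ω * (B ω)ᴴ).trace ∂P)) := by
  rw [dist_eq_norm, @norm_sub_sq 𝕜, norm_toLp_sq_of_mem_unitaryGroup hA hAu,
    norm_toLp_sq_of_mem_unitaryGroup hB hBu, ← inner_re_symm, hB.inner_toLp_toLp]
  simp_rw [inner_toLp_vec, trace_mul_comm (B _)ᴴ]
  ring

theorem sqrt_one_sub_re_integral_trace_div_card_eq_dist [IsProbabilityMeasure P] [Nonempty n]
    (hA : MemLp (fun ω => toLp 2 (A ω).vec) 2 P) (hB : MemLp (fun ω => toLp 2 (B ω).vec) 2 P)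
    (hAu : ∀ ω, A ω ∈ unitaryGroup n 𝕜) (hBu : ∀ ω, B ω ∈ unitaryGroup n 𝕜) :
    √(1 - RCLike.re (∫ ω, (A ω * (B ω)ᴴ).trace / Fintype.card n ∂P))
      = dist (hA.toLp _) (hB.toLp _) / √(2 * Fintype.card n) := by
  have hcard : (0 : ℝ) < Fintype.card n := by exact_mod_cast Fintype.card_pos
  rw [← Real.sqrt_sq dist_nonneg, dist_toLp_sq_of_mem_unitaryGroup hA hB hAu hBu,
    ← Real.sqrt_div' _ (by positivity), integral_div, ← RCLike.ofReal_natCast (K := 𝕜),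
    RCLike.div_re_ofReal]
  congr 1
  field_simp

end RandomUnitary

/-- The inequality `|Ψ(α) − Ψ(β)| ≤ Ψ(αβ⁻¹)` for the defect functional
`Ψ(α) = √(1 − Re E[tr H_α])` on random unitary matrices. -/
theorem defect_difference_bound {Ω : Type*} [MeasurableSpace Ω] (P : Measure Ω)
    [IsProbabilityMeasure P] (N : ℕ) (hN : 1 ≤ N)
    (U V : Ω → Matrix (Fin N) (Fin N) ℂ) (hU : Measurable U) (hV : Measurable V)
    (hUu : ∀ ω, U ω ∈ Matrix.unitaryGroup (Fin N) ℂ)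
    (hVu : ∀ ω, V ω ∈ Matrix.unitaryGroup (Fin N) ℂ) :
    |Real.sqrt (1 - (∫ ω, (U ω).trace / (N : ℂ) ∂P).re) -
        Real.sqrt (1 - (∫ ω, (V ω).trace / (N : ℂ) ∂P).re)| ≤
      Real.sqrt (1 - (∫ ω, (U ω * (V ω)ᴴ).trace / (N : ℂ) ∂P).re) := by
  have : Nonempty (Fin N) := ⟨⟨0, hN⟩⟩
  have hOne : ∀ _ : Ω, (1 : Matrix (Fin N) (Fin N) ℂ) ∈ unitaryGroup (Fin N) ℂ :=
    fun _ => one_mem _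
  have hU2 := memLp_toLp_vec_of_mem_unitaryGroup (P := P) hU hUu 2
  have hV2 := memLp_toLp_vec_of_mem_unitaryGroup (P := P) hV hVu 2
  have hOne2 := memLp_toLp_vec_of_mem_unitaryGroup (P := P) measurable_const hOne 2
  have hUV := sqrt_one_sub_re_integral_trace_div_card_eq_dist hU2 hV2 hUu hVu
  have hU1 := sqrt_one_sub_re_integral_trace_div_card_eq_dist hU2 hOne2 hUu hOne
  have hV1 := sqrt_one_sub_re_integral_trace_div_card_eq_dist hV2 hOne2 hVu hOne
  simp only [conjTranspose_one, mul_one, Fintype.card_fin, RCLike.re_to_complex] at hUV hU1 hV1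
  rw [hU1, hV1, hUV, ← sub_div, abs_div, abs_of_nonneg (Real.sqrt_nonneg _)]
  exact div_le_div_of_nonneg_right (abs_dist_sub_le _ _ _) (Real.sqrt_nonneg _)
end

section
/- Let μ be a Borel probability measure on ℝ with compact support, let z ∈ ℂ satisfy dist(z, supp μ) ≥ 1, and let α ≥ 2 be real. Write Log for the principal branch of the complex logarithm. Then |α ∫_ℝ Log(1 + 1/(α(z − x))) μ(dx)| ≤ 2 and |α ∫_ℝ Log(1 + 1/(α(z − x))) μ(dx) − ∫_ℝ (1/(z − x)) μ(dx)| ≤ 1/α. -/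
/-!
Put `w = 1 / (α (z - x))`, so that `‖w‖ ≤ 1 / 2` on the support of `μ`. There
`‖Log (1 + w)‖ ≤ (3/2) ‖w‖` and `‖Log (1 + w) - w‖ ≤ ‖w‖²`; multiplying by `α` bounds the
integrand of `G^α_μ` by `3/2` and its distance to `1 / (z - x)` by `1 / α`, and both bounds
pass to the integral against the probability measure `μ`.
-/

open MeasureTheory

namespace Complex

lemma norm_log_one_add_sub_self_le_sq {w : ℂ} (hw : ‖w‖ ≤ 1 / 2) :
    ‖log (1 + w) - w‖ ≤ ‖w‖ ^ 2 := by
  have hinv : (1 - ‖w‖)⁻¹ ≤ 2 := by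
    rw [inv_le_comm₀ (by linarith) (by norm_num)]
    linarith
  calc ‖log (1 + w) - w‖ ≤ ‖w‖ ^ 2 * (1 - ‖w‖)⁻¹ / 2 :=
        norm_log_one_add_sub_self_le (by linarith)
    _ ≤ ‖w‖ ^ 2 * 2 / 2 := by gcongr
    _ = ‖w‖ ^ 2 := by ring

section Regularized

variable {α : ℝ} {u : ℂ}

lemma norm_one_div_ofReal_mul (hα : 0 < α) (u : ℂ) :
    ‖1 / ((α : ℂ) * u)‖ = 1 / (α * ‖u‖) := by
  rw [norm_div, norm_one, norm_mul, norm_real, Real.norm_of_nonneg hα.le]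

lemma norm_one_div_ofReal_mul_le_half (hα : 0 < α) (h : 2 ≤ α * ‖u‖) :
    ‖1 / ((α : ℂ) * u)‖ ≤ 1 / 2 := by
  rw [norm_one_div_ofReal_mul hα]
  gcongr

lemma norm_ofReal_mul_log_one_add_one_div_le (hα : 0 < α) (h : 2 ≤ α * ‖u‖) :
    ‖(α : ℂ) * log (1 + 1 / ((α : ℂ) * u))‖ ≤ 3 / (2 * ‖u‖) := by
  have hu : 0 < ‖u‖ := pos_of_mul_pos_right (by linarith) hα.le
  rw [norm_mul, norm_real, Real.norm_of_nonneg hα.le]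
  calc α * ‖log (1 + 1 / ((α : ℂ) * u))‖ ≤ α * (3 / 2 * ‖1 / ((α : ℂ) * u)‖) := by
        gcongr
        exact norm_log_one_add_half_le_self (norm_one_div_ofReal_mul_le_half hα h)
    _ = 3 / (2 * ‖u‖) := by
        rw [norm_one_div_ofReal_mul hα]
        field_simp

lemma norm_ofReal_mul_log_one_add_one_div_sub_le (hα : 0 < α) (h : 2 ≤ α * ‖u‖) :
    ‖(α : ℂ) * log (1 + 1 / ((α : ℂ) * u)) - 1 / u‖ ≤ 1 / (α * ‖u‖ ^ 2) := by
  have hu : 0 < ‖u‖ := pos_of_mul_pos_right (by linarith) hα.le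
  have hα' : (α : ℂ) ≠ 0 := ofReal_ne_zero.mpr hα.ne'
  have hfactor : (α : ℂ) * log (1 + 1 / ((α : ℂ) * u)) - 1 / u =
      (α : ℂ) * (log (1 + 1 / ((α : ℂ) * u)) - 1 / ((α : ℂ) * u)) := by
    rw [mul_sub]
    field_simp
  rw [hfactor, norm_mul, norm_real, Real.norm_of_nonneg hα.le]
  calc α * ‖log (1 + 1 / ((α : ℂ) * u)) - 1 / ((α : ℂ) * u)‖
        ≤ α * ‖1 / ((α : ℂ) * u)‖ ^ 2 := by
        gcongr
        exact norm_log_one_add_sub_self_le_sq (norm_one_div_ofReal_mul_le_half hα h)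
    _ = 1 / (α * ‖u‖ ^ 2) := by
        rw [norm_one_div_ofReal_mul hα]
        field_simp

lemma norm_ofReal_mul_log_one_add_one_div_le_two (hα : 2 ≤ α) (hu : 1 ≤ ‖u‖) :
    ‖(α : ℂ) * log (1 + 1 / ((α : ℂ) * u))‖ ≤ 2 := by
  refine (norm_ofReal_mul_log_one_add_one_div_le (by linarith) (by nlinarith)).trans ?_
  rw [div_le_iff₀ (by positivity)]
  linarith

lemma norm_ofReal_mul_log_one_add_one_div_sub_le_inv (hα : 2 ≤ α) (hu : 1 ≤ ‖u‖) :
    ‖(α : ℂ) * log (1 + 1 / ((α : ℂ) * u)) - 1 / u‖ ≤ 1 / α := by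
  have hα0 : 0 < α := by linarith
  refine (norm_ofReal_mul_log_one_add_one_div_sub_le hα0 (by nlinarith)).trans ?_
  gcongr
  exact le_mul_of_one_le_right hα0.le (one_le_pow₀ hu)

end Regularized

end Complex

theorem regularized_stieltjes_estimates_general (μ : Measure ℝ) [IsProbabilityMeasure μ]
    (K : Set ℝ) (hKfull : μ Kᶜ = 0)
    (z : ℂ) (hz : ∀ x ∈ K, 1 ≤ dist z (x : ℂ)) (α : ℝ) (hα : 2 ≤ α) :
    ‖((α : ℂ) * ∫ x, Complex.log (1 + 1 / ((α : ℂ) * (z - (x : ℂ)))) ∂μ)‖ ≤ 2 ∧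
    ‖((α : ℂ) * (∫ x, Complex.log (1 + 1 / ((α : ℂ) * (z - (x : ℂ)))) ∂μ) -
        ∫ x, 1 / (z - (x : ℂ)) ∂μ)‖ ≤ 1 / α := by
  have hfar : ∀ᵐ x : ℝ ∂μ, 1 ≤ ‖z - (x : ℂ)‖ := by
    filter_upwards [measure_eq_zero_iff_ae_notMem.mp hKfull] with x hx
    simpa [Complex.dist_eq] using hz x (by simpa using hx)
  have hlog := hfar.mono fun x hx => Complex.norm_ofReal_mul_log_one_add_one_div_le_two hα hx
  have hdiff := hfar.mono fun x hx =>
    Complex.norm_ofReal_mul_log_one_add_one_div_sub_le_inv hα hx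
  have hinv : ∀ᵐ x : ℝ ∂μ, ‖1 / (z - (x : ℂ))‖ ≤ 1 := by
    filter_upwards [hfar] with x hx
    rw [norm_div, norm_one]
    exact div_le_one_of_le₀ hx (by positivity)
  have hlog_meas : Measurable fun x : ℝ => Complex.log (1 + 1 / ((α : ℂ) * (z - x))) :=
    Complex.measurable_log.comp (by fun_prop)
  have hlog_int := Integrable.of_bound (hlog_meas.const_mul _).aestronglyMeasurable 2 hlog
  have hinv_int := Integrable.of_bound
    (by fun_prop : Measurable fun x : ℝ => 1 / (z - (x : ℂ))).aestronglyMeasurable 1 hinv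
  rw [← integral_const_mul]
  constructor
  · simpa using norm_integral_le_of_norm_le_const hlog
  · rw [← integral_sub hlog_int hinv_int]
    simpa using norm_integral_le_of_norm_le_const hdiff

/-- Estimates for the exponentially regularized Stieltjes transform
`G^α_μ(z) = α ∫ Log(1 + 1/(α(z − x))) μ(dx)` of a compactly supported probability measure,
when `z` is at distance at least `1` from the support and `α ≥ 2`. -/
theorem regularized_stieltjes_estimates (μ : Measure ℝ) [IsProbabilityMeasure μ]
    (K : Set ℝ) (hK : IsCompact K) (hKfull : μ Kᶜ = 0)
    (z : ℂ) (hz : ∀ x ∈ K, 1 ≤ dist z (x : ℂ)) (α : ℝ) (hα : 2 ≤ α) :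
    ‖((α : ℂ) * ∫ x, Complex.log (1 + 1 / ((α : ℂ) * (z - (x : ℂ)))) ∂μ)‖ ≤ 2 ∧
    ‖((α : ℂ) * (∫ x, Complex.log (1 + 1 / ((α : ℂ) * (z - (x : ℂ)))) ∂μ) -
        ∫ x, 1 / (z - (x : ℂ)) ∂μ)‖ ≤ 1 / α :=
  regularized_stieltjes_estimates_general μ K hKfull z hz α hα
end

section
/- Let r > 0, let g : ℂ → ℂ be holomorphic on {z ∈ ℂ : |z| > r} with g(z) → 0 as |z| → ∞, and let z₀ ∈ ℂ with |z₀| ≤ r. Then for every R > r, (1/(2πi)) ∮_{|z|=R} e^{g(z)} / (z − z₀) dz = 1, where the contour integral is over the positively oriented circle of radius R centred at 0. -/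
/-!
Write `e^{g(z)}/(z - z₀) = 1/(z - z₀) + h(z)` with `h(z) = (e^{g(z)} - 1)/(z - z₀)`. The first
term integrates to `2πi`. The remainder `h` is holomorphic for `‖z‖ > r` and `o(1/z)` at infinity:
by Cauchy its integral over `C(0, R')` is the same for all `R' ≥ R`, while the standard estimate
bounds it by `2π · sup_{‖z‖ = R'} ‖z h(z)‖ → 0`, so it vanishes.
-/

open Complex Filter Metric Set Asymptotics Bornology

lemma isBigO_sub_inv_inv_cobounded {𝕜 : Type*} [NormedField 𝕜] (a : 𝕜) :
    (fun z : 𝕜 => (z - a)⁻¹) =O[cobounded 𝕜] (·⁻¹) := by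
  refine IsBigO.of_bound 2 ?_
  filter_upwards [eventually_cobounded_le_norm (2 * ‖a‖ + 1)] with z hz
  have hz0 : 0 < ‖z‖ := by linarith [norm_nonneg a]
  have hza : ‖z‖ / 2 ≤ ‖z - a‖ := by linarith [norm_sub_norm_le z a]
  rw [norm_inv, norm_inv, ← div_eq_mul_inv]
  exact inv_anti₀ (by positivity) hza |>.trans_eq (by field_simp)

variable {E : Type*} [NormedAddCommGroup E] [NormedSpace ℂ E]

lemma tendsto_circleIntegral_atTop_of_isLittleO_inv {f : ℂ → E}
    (hf : f =o[cobounded ℂ] (·⁻¹)) :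
    Tendsto (fun R : ℝ => ∮ z in C(0, R), f z) atTop (nhds 0) := by
  refine isLittleO_one_iff ℝ |>.mp <| isLittleO_iff.mpr fun c hc => ?_
  obtain ⟨M, -, hM⟩ := hasBasis_cobounded_norm.eventually_iff.mp
    (isLittleO_iff.mp hf (div_pos hc Real.two_pi_pos))
  filter_upwards [eventually_ge_atTop M, eventually_gt_atTop 0] with R hRM hR0
  have hbound : ∀ z ∈ sphere (0 : ℂ) R, ‖f z‖ ≤ c / (2 * Real.pi) * R⁻¹ := by
    intro z hz
    rw [mem_sphere_zero_iff_norm] at hz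
    simpa [hz] using hM (show M ≤ ‖z‖ from hz ▸ hRM)
  calc ‖∮ z in C(0, R), f z‖ ≤ 2 * Real.pi * R * (c / (2 * Real.pi) * R⁻¹) :=
        circleIntegral.norm_integral_le_of_norm_le_const hR0.le hbound
    _ = c * ‖(1 : ℝ)‖ := by field_simp; simp

lemma circleIntegral_eq_zero_of_differentiableOn_of_isLittleO_inv {f : ℂ → E} {r R : ℝ}
    (hr : 0 ≤ r) (hR : r < R) (hd : DifferentiableOn ℂ f {z | r < ‖z‖})
    (hf : f =o[cobounded ℂ] (·⁻¹)) :
    ∮ z in C(0, R), f z = 0 := by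
  have hopen : IsOpen {z : ℂ | r < ‖z‖} := isOpen_lt continuous_const continuous_norm
  have hconst : ∀ᶠ R' in atTop, ∮ z in C(0, R), f z = ∮ z in C(0, R'), f z := by
    filter_upwards [eventually_ge_atTop R] with R' hRR'
    refine (circleIntegral_eq_of_differentiable_on_annulus_off_countable (hr.trans_lt hR) hRR'
      countable_empty (hd.continuousOn.mono ?_) fun z hz => hd.differentiableAt ?_).symm
    · intro z hz
      simp only [Set.mem_sdiff, mem_closedBall, mem_ball, dist_zero_right, not_lt] at hz
      exact hR.trans_le hz.2
    · simp only [Set.mem_sdiff, mem_ball, mem_closedBall, dist_zero_right, not_le] at hz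
      exact hopen.mem_nhds (hR.trans hz.1.2)
  exact tendsto_nhds_unique (tendsto_const_nhds.congr' hconst)
    (tendsto_circleIntegral_atTop_of_isLittleO_inv hf)

theorem contour_exp_vanishing_at_infty_general (r : ℝ) (g : ℂ → ℂ)
    (hg : DifferentiableOn ℂ g {z : ℂ | r < ‖z‖})
    (hg0 : Filter.Tendsto g (Bornology.cobounded ℂ) (nhds 0))
    (z₀ : ℂ) (hz₀ : ‖z₀‖ ≤ r) (R : ℝ) (hR : r < R) :
    (1 / (2 * (Real.pi : ℂ) * Complex.I)) *
        (∮ z in C(0, R), Complex.exp (g z) / (z - z₀)) = 1 := by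
  have hr : 0 ≤ r := (norm_nonneg z₀).trans hz₀
  have hz₀R : z₀ ∈ ball (0 : ℂ) R := mem_ball_zero_iff.mpr (hz₀.trans_lt hR)
  have hsphere : sphere (0 : ℂ) R ⊆ {z | r < ‖z‖} := fun z hz =>
    show r < ‖z‖ from mem_sphere_zero_iff_norm.mp hz ▸ hR
  have hd : DifferentiableOn ℂ (fun z => (exp (g z) - 1) / (z - z₀)) {z | r < ‖z‖} :=
    (hg.cexp.sub_const 1).div (differentiableOn_id.sub_const z₀) fun z hz =>
      sub_ne_zero.mpr (ne_of_apply_ne norm (hz₀.trans_lt hz).ne')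
  have hlittleO : (fun z => (exp (g z) - 1) / (z - z₀)) =o[cobounded ℂ] (·⁻¹) := by
    have hexp : Tendsto (fun z => exp (g z) - 1) (cobounded ℂ) (nhds 0) := by
      simpa using ((continuous_exp.tendsto 0).comp hg0).sub_const 1
    simpa [div_eq_mul_inv] using
      ((isLittleO_one_iff ℂ).mpr hexp).mul_isBigO (isBigO_sub_inv_inv_cobounded z₀)
  have hsplit : ∮ z in C(0, R), exp (g z) / (z - z₀) =
      (∮ z in C(0, R), (z - z₀)⁻¹) + ∮ z in C(0, R), (exp (g z) - 1) / (z - z₀) := by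
    rw [← circleIntegral.integral_add]
    · exact circleIntegral.integral_congr (hr.trans hR.le) fun z _ => by ring
    · refine circleIntegrable_sub_inv_iff.mpr (Or.inr fun h => ?_)
      rw [abs_of_pos (hr.trans_lt hR), mem_sphere_zero_iff_norm] at h
      exact (mem_ball_zero_iff.mp hz₀R).ne h
    · exact (hd.continuousOn.mono hsphere).circleIntegrable (hr.trans hR.le)
  rw [hsplit, circleIntegral.integral_sub_inv_of_mem_ball hz₀R,
    circleIntegral_eq_zero_of_differentiableOn_of_isLittleO_inv hr hR hd hlittleO, add_zero]
  field_simp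

/-- Contour evaluation `(1/2πi) ∮ e^{g(z)}/(z − z₀) dz = 1` for a function `g` holomorphic
outside a disc and vanishing at infinity. -/
theorem contour_exp_vanishing_at_infty (r : ℝ) (hr : 0 < r) (g : ℂ → ℂ)
    (hg : DifferentiableOn ℂ g {z : ℂ | r < ‖z‖})
    (hg0 : Filter.Tendsto g (Bornology.cobounded ℂ) (nhds 0))
    (z₀ : ℂ) (hz₀ : ‖z₀‖ ≤ r) (R : ℝ) (hR : r < R) :
    (1 / (2 * (Real.pi : ℂ) * Complex.I)) *
        (∮ z in C(0, R), Complex.exp (g z) / (z - z₀)) = 1 :=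
  contour_exp_vanishing_at_infty_general r g hg hg0 z₀ hz₀ R hR
end
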